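/- Let p and q be projections in a *-ring R such that p(1-q) and (1-p)q are Moore-Penrose invertible. Then e = 1 - p(1-q)(p(1-q)p)† - (1-p)q((1-p)q(1-p))† is a projection and eR = (pR ∩ qR) + ((1-p)R ∩ (1-q)R), where the two summands are orthogonal: y*x = 0 for all x ∈ pR ∩ qR and y ∈ (1-p)R ∩ (1-q)R. -/

import Mathlib

/-!
For a Moore-Penrose invertible `a`, `a a†` is the projection onto `aR`, and `(a a*)† = a†* a†`.
Since `p(1-q)p = B B*` for `B = p(1-q)`, this identifies `p(1-q)(p(1-q)p)†` with `B B†`, a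
subprojection of `p` annihilating exactly the elements of `pR` that `B* = (1-q)p` kills, i.e.
`pR ∩ qR`; hence `p - B B†` is the projection onto `pR ∩ qR`. Symmetrically
`(1-p) - (1-p)q((1-p)q)†` projects onto `(1-p)R ∩ (1-q)R`. These two projections lie under the
orthogonal projections `p` and `1-p`, so their sum `e` is a projection whose range is the sum of
the two ranges.
-/

variable {R : Type*} [Ring R] [StarRing R]

/-- `b` is a Moore-Penrose inverse of `a`. -/
def IsMP (a b : R) : Prop :=
  a * b * a = a ∧ b * a * b = b ∧ star (a * b) = a * b ∧ star (b * a) = b * a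

/-- `p` is a projection: self-adjoint idempotent. -/
def IsProj (p : R) : Prop := p * p = p ∧ star p = p

/-- The right ideal `aR`. -/
def rid (a : R) : Set R := {x | ∃ r, x = a * r}

/-- Elementwise sum of two subsets. -/
def sid (A B : Set R) : Set R := {z | ∃ x ∈ A, ∃ y ∈ B, z = x + y}

namespace IsMP

variable {a c : R}

theorem unique {b₁ b₂ : R} (h₁ : IsMP a b₁) (h₂ : IsMP a b₂) : b₁ = b₂ := by
  obtain ⟨h11, h12, h13, h14⟩ := h₁
  obtain ⟨h21, h22, h23, h24⟩ := h₂
  have hab : a * b₁ = a * b₂ :=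
    calc a * b₁ = a * b₂ * (a * b₁) := by rw [← mul_assoc, h21]
    _ = star (a * b₁ * (a * b₂)) := by rw [star_mul, h13, h23]
    _ = a * b₂ := by rw [← mul_assoc, h11, h23]
  have hba : b₁ * a = b₂ * a :=
    calc b₁ * a = b₁ * a * (b₂ * a) := by rw [mul_assoc, ← mul_assoc a, h21]
    _ = star (b₂ * a * (b₁ * a)) := by rw [star_mul, h14, h24]
    _ = b₂ * a := by rw [mul_assoc, ← mul_assoc a, h11, h24]
  calc b₁ = b₁ * (a * b₂) := by rw [← hab, ← mul_assoc, h12]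
  _ = b₂ := by rw [← mul_assoc, hba, h22]

theorem mul_isProj (h : IsMP a c) : IsProj (a * c) :=
  ⟨by rw [← mul_assoc, h.1], h.2.2.1⟩

theorem star_mul_mul (h : IsMP a c) : star a * (a * c) = star a := by
  conv_rhs => rw [← h.1, star_mul, h.2.2.1]

theorem star_eq (h : IsMP a c) : star c = a * (c * star c) :=
  calc star c = star (c * (a * c)) := by rw [← mul_assoc, h.2.1]
  _ = a * (c * star c) := by rw [star_mul, h.2.2.1, mul_assoc]

theorem mul_star_mul_star_mul (h : IsMP a c) : a * star a * (star c * c) = a * c := by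
  calc a * star a * (star c * c) = a * star (c * a) * c := by rw [star_mul]; noncomm_ring
  _ = a * c := by rw [h.2.2.2, ← mul_assoc, h.1]

theorem mul_star_self (h : IsMP a c) : IsMP (a * star a) (star c * c) := by
  have hl := h.mul_star_mul_star_mul
  have hr : star c * c * (a * star a) = a * c := by
    simpa only [star_mul, star_star, mul_assoc, h.2.2.1] using congrArg star hl
  refine ⟨?_, ?_, by rw [hl, h.2.2.1], by rw [hr, h.2.2.1]⟩
  · rw [hl, ← mul_assoc, h.1]
  · rw [mul_assoc, hl, mul_assoc, ← mul_assoc c, h.2.1]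

end IsMP

theorem star_mul_eq_zero_of_mem_rid {e f x y : R} (hf : star f = f) (hfe : f * e = 0)
    (hx : x ∈ rid e) (hy : y ∈ rid f) : star y * x = 0 := by
  obtain ⟨r, rfl⟩ := hx
  obtain ⟨s, rfl⟩ := hy
  rw [star_mul, hf, mul_assoc, ← mul_assoc f, hfe, zero_mul, mul_zero]

namespace IsProj

variable {p q e f : R}

theorem mem_rid_iff (hp : IsProj p) {x : R} : x ∈ rid p ↔ p * x = x := by
  refine ⟨?_, fun h => ⟨x, h.symm⟩⟩
  rintro ⟨r, rfl⟩
  rw [← mul_assoc, hp.1]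

theorem mul_eq_left_of_mul_eq_right (hp : IsProj p) (he : star e = e) (h : p * e = e) :
    e * p = e := by
  simpa only [star_mul, hp.2, he] using congrArg star h

theorem one_sub (hp : IsProj p) : IsProj (1 - p) :=
  ⟨by rw [mul_sub, mul_one, sub_mul, one_mul, hp.1, sub_self, sub_zero],
    by rw [star_sub, star_one, hp.2]⟩

theorem sub (hp : IsProj p) (he : IsProj e) (h : p * e = e) : IsProj (p - e) := by
  have h' := hp.mul_eq_left_of_mul_eq_right he.2 h
  refine ⟨?_, by rw [star_sub, hp.2, he.2]⟩
  calc (p - e) * (p - e) = p * p - p * e - e * p + e * e := by noncomm_ring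
  _ = p - e := by rw [hp.1, he.1, h, h']; abel

theorem add (he : IsProj e) (hf : IsProj f) (hfe : f * e = 0) : IsProj (e + f) := by
  have hef : e * f = 0 := by simpa only [star_mul, he.2, hf.2, star_zero] using congrArg star hfe
  refine ⟨?_, by rw [star_add, he.2, hf.2]⟩
  calc (e + f) * (e + f) = e * e + e * f + f * e + f * f := by noncomm_ring
  _ = e + f := by rw [he.1, hf.1, hef, hfe]; abel

theorem rid_add (he : IsProj e) (hf : IsProj f) (hfe : f * e = 0) :
    rid (e + f) = sid (rid e) (rid f) := by
  have hef : e * f = 0 := by simpa only [star_mul, he.2, hf.2, star_zero] using congrArg star hfe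
  ext z
  constructor
  · rintro ⟨r, rfl⟩
    exact ⟨e * r, ⟨r, rfl⟩, f * r, ⟨r, rfl⟩, add_mul e f r⟩
  · rintro ⟨x, hx, y, hy, rfl⟩
    rw [he.mem_rid_iff] at hx
    rw [hf.mem_rid_iff] at hy
    refine ⟨x + y, ?_⟩
    calc x + y = e * x + f * x + (e * y + f * y) := by
          rw [← hx, ← hy, ← mul_assoc, ← mul_assoc, ← mul_assoc, ← mul_assoc, he.1, hf.1, hef,
            hfe, zero_mul, zero_mul, add_zero, zero_add]
    _ = (e + f) * (x + y) := by noncomm_ring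

theorem mul_one_sub_mul_eq_of_isMP {c u : R} (hp : IsProj p) (hq : IsProj q)
    (hc : IsMP (p * (1 - q)) c) (hu : IsMP (p * (1 - q) * p) u) :
    p * (1 - q) * u = p * (1 - q) * c := by
  have hS : p * (1 - q) * star (p * (1 - q)) = p * (1 - q) * p := by
    rw [star_mul, hq.one_sub.2, hp.2, ← mul_assoc, mul_assoc p, hq.one_sub.1]
  have hu' : u = star c * c := hu.unique (hS ▸ hc.mul_star_self)
  have hpu : p * u = u := by
    rw [hu', ← mul_assoc, hc.star_eq]
    simp only [← mul_assoc, hp.1]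
  rw [← hc.mul_star_mul_star_mul, hS, ← hu', mul_assoc _ p, hpu]

theorem isProj_sub_mul_of_isMP {c : R} (hp : IsProj p) (hc : IsMP (p * (1 - q)) c) :
    IsProj (p - p * (1 - q) * c) :=
  hp.sub hc.mul_isProj (by rw [← mul_assoc, ← mul_assoc, hp.1])

theorem rid_sub_mul_of_isMP {c : R} (hp : IsProj p) (hq : IsProj q)
    (hc : IsMP (p * (1 - q)) c) : rid (p - p * (1 - q) * c) = rid p ∩ rid q := by
  set B := p * (1 - q)
  have hB : star B = (1 - q) * p := by rw [star_mul, hq.one_sub.2, hp.2]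
  have hpB : p * (B * c) = B * c := by rw [← mul_assoc, ← mul_assoc, hp.1]
  ext x
  rw [Set.mem_inter_iff, (isProj_sub_mul_of_isMP hp hc).mem_rid_iff, hp.mem_rid_iff,
    hq.mem_rid_iff]
  constructor
  · intro hx
    have hqE : q * (p - B * c) = p - B * c := by
      rw [eq_comm, ← sub_eq_zero, ← one_sub_mul, mul_sub, ← hpB, ← mul_assoc, ← mul_assoc, ← hB,
        mul_assoc, hc.star_mul_mul, sub_self]
    refine ⟨by rw [← hx, ← mul_assoc, mul_sub, hp.1, hpB], ?_⟩
    rw [← hx, ← mul_assoc, hqE]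
  · rintro ⟨hpx, hqx⟩
    have hBx : star B * x = 0 := by rw [hB, mul_assoc, hpx, sub_mul, one_mul, hqx, sub_self]
    rw [sub_mul, hpx, ← hc.2.2.1, star_mul, mul_assoc, hBx, mul_zero, sub_zero]

end IsProj

theorem stmt19 (p q u v : R) (hp : IsProj p) (hq : IsProj q)
    (h1 : ∃ c, IsMP (p * (1 - q)) c) (h2 : ∃ c, IsMP ((1 - p) * q) c)
    (hu : IsMP (p * (1 - q) * p) u) (hv : IsMP ((1 - p) * q * (1 - p)) v) :
    IsProj (1 - p * (1 - q) * u - (1 - p) * q * v) ∧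
    rid (1 - p * (1 - q) * u - (1 - p) * q * v) =
      sid (rid p ∩ rid q) (rid (1 - p) ∩ rid (1 - q)) ∧
    (∀ x ∈ rid p ∩ rid q, ∀ y ∈ rid (1 - p) ∩ rid (1 - q), star y * x = 0) := by
  obtain ⟨c, hc⟩ := h1
  obtain ⟨d, hd⟩ := h2
  have hd' : IsMP ((1 - p) * (1 - (1 - q))) d := by rwa [sub_sub_cancel]
  have hv' : IsMP ((1 - p) * (1 - (1 - q)) * (1 - p)) v := by rwa [sub_sub_cancel]
  have hpp : (1 - p) * p = 0 := by rw [sub_mul, one_mul, hp.1, sub_self]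
  have horth {x y : R} (hx : x ∈ rid p) (hy : y ∈ rid (1 - p)) : star y * x = 0 :=
    star_mul_eq_zero_of_mem_rid hp.one_sub.2 hpp hx hy
  have hu₁ := IsProj.mul_one_sub_mul_eq_of_isMP hp hq hc hu
  have hv₂ := IsProj.mul_one_sub_mul_eq_of_isMP hp.one_sub hq.one_sub hd' hv'
  have he₁ := IsProj.isProj_sub_mul_of_isMP hp hc
  have he₂ := IsProj.isProj_sub_mul_of_isMP hp.one_sub hd'
  have hr₁ := IsProj.rid_sub_mul_of_isMP hp hq hc
  have hr₂ := IsProj.rid_sub_mul_of_isMP hp.one_sub hq.one_sub hd'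
  simp only [sub_sub_cancel] at hv₂ he₂ hr₂
  set e₁ := p - p * (1 - q) * c with he₁_def
  set e₂ := 1 - p - (1 - p) * q * d with he₂_def
  have h₂₁ : e₂ * e₁ = 0 := by
    simpa only [he₂.2] using
      horth (hr₁.subset ⟨1, (mul_one e₁).symm⟩).1 (hr₂.subset ⟨1, (mul_one e₂).symm⟩).1
  have he : 1 - p * (1 - q) * u - (1 - p) * q * v = e₁ + e₂ := by
    rw [hu₁, hv₂, he₁_def, he₂_def]
    abel
  rw [he, he₁.rid_add he₂ h₂₁, hr₁, hr₂]
  exact ⟨he₁.add he₂ h₂₁, rfl, fun x hx y hy => horth hx.1 hy.1⟩
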